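/- arXiv:1201.3350 — 9 statements merged into one kernel-verified Lean document; each statement's English description precedes it below -/
import Mathlib

section
/- For any move set M ⊆ ℕ² \ {(0,0)}, every position (x,y) ∈ T_Q is a terminal position of the Q-subtraction game G_Q(M), i.e. there is no legal move from (x,y). -/
/-- Membership in the set of allowed positions `B_Q`. -/
def inBQ (p1 q1 p2 q2 : ℕ) (pos : ℕ × ℕ) : Prop :=
  pos.1 * q1 ≤ pos.2 * p1 ∧ pos.2 * p2 ≤ pos.1 * q2

/-- Membership in the set `T_Q` (the inequalities are read in ℤ). -/
def inTQ (p1 q1 p2 q2 : ℕ) (pos : ℕ × ℕ) : Prop :=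
  inBQ p1 q1 p2 q2 pos ∧
    (p1 : ℤ) * ((pos.2 : ℤ) - (q2 : ℤ)) < (q1 : ℤ) * ((pos.1 : ℤ) - (p2 : ℤ)) ∧
    (p2 : ℤ) * ((pos.2 : ℤ) - (q1 : ℤ)) > (q2 : ℤ) * ((pos.1 : ℤ) - (p1 : ℤ))

/-- A legal move of the Q-subtraction game `G_Q(M)`. -/
def QMove (p1 q1 p2 q2 : ℕ) (M : Set (ℕ × ℕ)) (pos pos' : ℕ × ℕ) : Prop :=
  ∃ s t : ℕ, (s, t) ∈ M ∧
    p1 * s + p2 * t ≤ pos.1 ∧ q1 * s + q2 * t ≤ pos.2 ∧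
    pos'.1 = pos.1 - (p1 * s + p2 * t) ∧ pos'.2 = pos.2 - (q1 * s + q2 * t) ∧
    inBQ p1 q1 p2 q2 pos'

/-!
Moving by `s • (p₁, q₁) + t • (p₂, q₂)` changes the cross product `q₁X − p₁Y` by `t D` and
`p₂Y − q₂X` by `s D`. On `T_Q` both quantities exceed `−D`, so any move with `t ≥ 1` makes the
first positive and any move with `s ≥ 1` makes the second positive; either way the target leaves
`B_Q`.
-/

section CrossProduct

variable {R : Type*} [CommRing R] [LinearOrder R] [IsStrictOrderedRing R]
  {p1 q1 p2 q2 x y s t : R}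

theorem cross_lt_of_one_le_right (hD : q1 * p2 ≤ p1 * q2) (ht : 1 ≤ t)
    (hT : p1 * (y - q2) < q1 * (x - p2)) :
    p1 * (y - (q1 * s + q2 * t)) < q1 * (x - (p1 * s + p2 * t)) := by
  have hgrowth : 0 ≤ (t - 1) * (p1 * q2 - q1 * p2) :=
    mul_nonneg (sub_nonneg.2 ht) (sub_nonneg.2 hD)
  linear_combination hT + hgrowth

theorem cross_lt_of_one_le_left (hD : q1 * p2 ≤ p1 * q2) (hs : 1 ≤ s)
    (hT : q2 * (x - p1) < p2 * (y - q1)) :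
    q2 * (x - (p1 * s + p2 * t)) < p2 * (y - (q1 * s + q2 * t)) := by
  have hgrowth : 0 ≤ (s - 1) * (p1 * q2 - q1 * p2) :=
    mul_nonneg (sub_nonneg.2 hs) (sub_nonneg.2 hD)
  linear_combination hT + hgrowth

end CrossProduct

section Move

variable {p1 q1 p2 q2 x y s t : ℕ}

theorem not_inBQ_sub_of_pos_right (hD : q1 * p2 ≤ p1 * q2) (ht : 1 ≤ t)
    (hx : p1 * s + p2 * t ≤ x) (hy : q1 * s + q2 * t ≤ y)
    (hT : (p1 : ℤ) * (y - q2) < q1 * (x - p2)) :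
    ¬ inBQ p1 q1 p2 q2 (x - (p1 * s + p2 * t), y - (q1 * s + q2 * t)) := by
  rintro ⟨hB, -⟩
  have hcross : (p1 : ℤ) * (y - (q1 * s + q2 * t)) < q1 * (x - (p1 * s + p2 * t)) :=
    cross_lt_of_one_le_right (mod_cast hD) (mod_cast ht) hT
  dsimp only at hB
  zify [hx, hy] at hB
  linarith

theorem not_inBQ_sub_of_pos_left (hD : q1 * p2 ≤ p1 * q2) (hs : 1 ≤ s)
    (hx : p1 * s + p2 * t ≤ x) (hy : q1 * s + q2 * t ≤ y)
    (hT : (q2 : ℤ) * (x - p1) < p2 * (y - q1)) :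
    ¬ inBQ p1 q1 p2 q2 (x - (p1 * s + p2 * t), y - (q1 * s + q2 * t)) := by
  rintro ⟨-, hB⟩
  have hcross : (q2 : ℤ) * (x - (p1 * s + p2 * t)) < p2 * (y - (q1 * s + q2 * t)) :=
    cross_lt_of_one_le_left (mod_cast hD) (mod_cast hs) hT
  dsimp only at hB
  zify [hx, hy] at hB
  linarith

end Move

theorem stmt_0_general (p1 q1 p2 q2 : ℕ)
    (hD : q1 * p2 < p1 * q2)
    (M : Set (ℕ × ℕ)) (hM : (0, 0) ∉ M)
    (x y : ℕ) (hxy : inTQ p1 q1 p2 q2 (x, y)) :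
    ¬ ∃ pos', QMove p1 q1 p2 q2 M (x, y) pos' := by
  rintro ⟨⟨x', y'⟩, s, t, hst, hx, hy, rfl, rfl, hB⟩
  obtain ⟨-, hT1, hT2⟩ := hxy
  rcases Nat.eq_zero_or_pos t with rfl | ht
  · rcases Nat.eq_zero_or_pos s with rfl | hs
    · exact hM hst
    · exact not_inBQ_sub_of_pos_left hD.le hs hx hy hT2 hB
  · exact not_inBQ_sub_of_pos_right hD.le ht hx hy hT1 hB

theorem stmt_0 (p1 q1 p2 q2 : ℕ) (hp1 : 0 < p1) (hq2 : 0 < q2)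
    (hD : q1 * p2 < p1 * q2)
    (M : Set (ℕ × ℕ)) (hM : (0, 0) ∉ M)
    (x y : ℕ) (hxy : inTQ p1 q1 p2 q2 (x, y)) :
    ¬ ∃ pos', QMove p1 q1 p2 q2 M (x, y) pos' :=
  stmt_0_general p1 q1 p2 q2 hD M hM x y hxy
end

section
/- For a move set M ⊆ ℕ² \ {(0,0)}, the set T_Q equals the set of ALL terminal positions of the Q-subtraction game G_Q(M) if and only if {(0,1),(1,0)} ⊆ M. -/
/-!
Write `v₁ = (p1, q1)`, `v₂ = (p2, q2)` and `D = cross v₁ v₂ > 0`. By Cramer's rule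
`D • pos = a • v₁ + b • v₂` with the integers `a = cross pos v₂`, `b = cross v₁ pos`.
Then `B_Q` is `0 ≤ a, b`, `T_Q` is `a, b < D`, and the move `(s, t)` is legal exactly when
`s * D ≤ a` and `t * D ≤ b`. Hence if `(1, 0), (0, 1) ∈ M` the terminal positions are those
with `a, b < D`. Conversely `v₂` (where `a = 0`, `b = D`) and `v₁` lie in `B_Q \ T_Q`, so they
have moves, and the only moves available from them are `(0, 1)` and `(1, 0)` respectively.
-/

namespace QSubtraction

def cross (u v : ℕ × ℕ) : ℤ := u.1 * v.2 - u.2 * v.1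

lemma cross_mul_fst (u v w : ℕ × ℕ) :
    w.1 * cross u v = u.1 * cross w v + v.1 * cross u w := by
  simp only [cross]; ring

lemma cross_mul_snd (u v w : ℕ × ℕ) :
    w.2 * cross u v = u.2 * cross w v + v.2 * cross u w := by
  simp only [cross]; ring

protected lemma cross_self (u : ℕ × ℕ) : cross u u = 0 := by
  simp only [cross]; ring

variable {p1 q1 p2 q2 : ℕ}

lemma inBQ_iff (pos : ℕ × ℕ) :
    inBQ p1 q1 p2 q2 pos ↔ 0 ≤ cross (p1, q1) pos ∧ 0 ≤ cross pos (p2, q2) := by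
  simp only [inBQ, cross, sub_nonneg]
  constructor <;> rintro ⟨h₁, h₂⟩ <;> constructor <;> linarith

lemma inTQ_iff (pos : ℕ × ℕ) :
    inTQ p1 q1 p2 q2 pos ↔ inBQ p1 q1 p2 q2 pos ∧
      cross (p1, q1) pos < cross (p1, q1) (p2, q2) ∧
        cross pos (p2, q2) < cross (p1, q1) (p2, q2) := by
  simp only [inTQ, cross, gt_iff_lt]
  refine and_congr_right fun _ => ?_
  constructor <;> rintro ⟨h₁, h₂⟩ <;> constructor <;> linarith

lemma inBQ_sub_iff {x y s t : ℕ} (hx : p1 * s + p2 * t ≤ x) (hy : q1 * s + q2 * t ≤ y) :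
    inBQ p1 q1 p2 q2 (x - (p1 * s + p2 * t), y - (q1 * s + q2 * t)) ↔
      t * cross (p1, q1) (p2, q2) ≤ cross (p1, q1) (x, y) ∧
        s * cross (p1, q1) (p2, q2) ≤ cross (x, y) (p2, q2) := by
  simp only [inBQ_iff, cross]
  push_cast [hx, hy]
  constructor <;> rintro ⟨h₁, h₂⟩ <;> constructor <;> linarith

lemma move_le_of_mul_le_cross {x y s t : ℕ} (hD : 0 < cross (p1, q1) (p2, q2))
    (ht : t * cross (p1, q1) (p2, q2) ≤ cross (p1, q1) (x, y))
    (hs : s * cross (p1, q1) (p2, q2) ≤ cross (x, y) (p2, q2)) :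
    p1 * s + p2 * t ≤ x ∧ q1 * s + q2 * t ≤ y := by
  set D := cross (p1, q1) (p2, q2)
  constructor
  · have key : (p1 * s + p2 * t : ℕ) * D ≤ x * D :=
      calc (p1 * s + p2 * t : ℕ) * D = p1 * (s * D) + p2 * (t * D) := by push_cast; ring
        _ ≤ p1 * cross (x, y) (p2, q2) + p2 * cross (p1, q1) (x, y) := by gcongr
        _ = x * D := (cross_mul_fst (p1, q1) (p2, q2) (x, y)).symm
    exact_mod_cast le_of_mul_le_mul_right key hD
  · have key : (q1 * s + q2 * t : ℕ) * D ≤ y * D :=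
      calc (q1 * s + q2 * t : ℕ) * D = q1 * (s * D) + q2 * (t * D) := by push_cast; ring
        _ ≤ q1 * cross (x, y) (p2, q2) + q2 * cross (p1, q1) (x, y) := by gcongr
        _ = y * D := (cross_mul_snd (p1, q1) (p2, q2) (x, y)).symm
    exact_mod_cast le_of_mul_le_mul_right key hD

lemma exists_qMove_iff (hD : 0 < cross (p1, q1) (p2, q2)) (M : Set (ℕ × ℕ))
    (pos : ℕ × ℕ) :
    (∃ pos', QMove p1 q1 p2 q2 M pos pos') ↔
      ∃ s t, (s, t) ∈ M ∧ t * cross (p1, q1) (p2, q2) ≤ cross (p1, q1) pos ∧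
        s * cross (p1, q1) (p2, q2) ≤ cross pos (p2, q2) := by
  obtain ⟨x, y⟩ := pos
  constructor
  · rintro ⟨⟨x', y'⟩, s, t, hst, hx, hy, rfl, rfl, hB⟩
    exact ⟨s, t, hst, (inBQ_sub_iff hx hy).1 hB⟩
  · rintro ⟨s, t, hst, ht, hs⟩
    obtain ⟨hx, hy⟩ := move_le_of_mul_le_cross hD ht hs
    exact ⟨_, s, t, hst, hx, hy, rfl, rfl, (inBQ_sub_iff hx hy).2 ⟨ht, hs⟩⟩

lemma eq_zero_and_le_one_of_mul_le {D : ℤ} (hD : 0 < D) {s t : ℕ} (hs : s * D ≤ 0)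
    (ht : t * D ≤ D) : s = 0 ∧ t ≤ 1 := by
  have hs' : (s : ℤ) ≤ 0 := le_of_mul_le_mul_right (by simpa using hs) hD
  have ht' : (t : ℤ) ≤ 1 := le_of_mul_le_mul_right (by simpa using ht) hD
  omega

lemma not_exists_mul_le_iff {M : Set (ℕ × ℕ)} (hM : (0, 0) ∉ M) (h01 : (0, 1) ∈ M)
    (h10 : (1, 0) ∈ M) {D a b : ℤ} (hD : 0 < D) (ha : 0 ≤ a) (hb : 0 ≤ b) :
    (¬∃ s t : ℕ, (s, t) ∈ M ∧ t * D ≤ a ∧ s * D ≤ b) ↔ a < D ∧ b < D := by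
  constructor
  · intro hno
    refine ⟨lt_of_not_ge fun h => hno ⟨0, 1, h01, by simpa using h, by simpa using hb⟩,
      lt_of_not_ge fun h => hno ⟨1, 0, h10, by simpa using ha, by simpa using h⟩⟩
  · rintro ⟨haD, hbD⟩ ⟨s, t, hst, ht, hs⟩
    rcases Nat.eq_zero_or_pos s with rfl | hs1
    · rcases Nat.eq_zero_or_pos t with rfl | ht1
      · exact hM hst
      · have : (1 : ℤ) ≤ t := by exact_mod_cast ht1
        nlinarith
    · have : (1 : ℤ) ≤ s := by exact_mod_cast hs1
      nlinarith

end QSubtraction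

open QSubtraction in
theorem stmt_1_general (p1 q1 p2 q2 : ℕ)
    (hD : q1 * p2 < p1 * q2)
    (M : Set (ℕ × ℕ)) (hM : (0, 0) ∉ M) :
    {pos : ℕ × ℕ | inBQ p1 q1 p2 q2 pos ∧ ¬ ∃ pos', QMove p1 q1 p2 q2 M pos pos'} =
      {pos : ℕ × ℕ | inTQ p1 q1 p2 q2 pos} ↔
    ((0, 1) ∈ M ∧ (1, 0) ∈ M) := by
  have hDpos : 0 < cross (p1, q1) (p2, q2) := by
    simp only [cross, sub_pos]; exact_mod_cast hD
  simp only [Set.ext_iff, Set.mem_ofPred_eq, inTQ_iff, exists_qMove_iff hDpos]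
  set D := cross (p1, q1) (p2, q2)
  constructor
  · intro h
    have move_of_not_inTQ : ∀ pos, inBQ p1 q1 p2 q2 pos →
        ¬(cross (p1, q1) pos < D ∧ cross pos (p2, q2) < D) →
        ∃ s t, (s, t) ∈ M ∧ t * D ≤ cross (p1, q1) pos ∧ s * D ≤ cross pos (p2, q2) :=
      fun pos hB hT => not_not.1 fun hno => hT ((h pos).1 ⟨hB, hno⟩).2
    constructor
    · obtain ⟨s, t, hst, ht, hs⟩ := move_of_not_inTQ (p2, q2)
        ((inBQ_iff _).2 ⟨hDpos.le, (QSubtraction.cross_self _).ge⟩) fun h => h.1.false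
      obtain ⟨rfl, ht1⟩ := eq_zero_and_le_one_of_mul_le hDpos
        (hs.trans_eq (QSubtraction.cross_self _)) ht
      interval_cases t
      · exact absurd hst hM
      · exact hst
    · obtain ⟨s, t, hst, ht, hs⟩ := move_of_not_inTQ (p1, q1)
        ((inBQ_iff _).2 ⟨(QSubtraction.cross_self _).ge, hDpos.le⟩) fun h => h.2.false
      obtain ⟨rfl, hs1⟩ := eq_zero_and_le_one_of_mul_le hDpos
        (ht.trans_eq (QSubtraction.cross_self _)) hs
      interval_cases s
      · exact absurd hst hM
      · exact hst
  · rintro ⟨h01, h10⟩ pos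
    refine and_congr_right fun hB => ?_
    obtain ⟨ha, hb⟩ := (inBQ_iff pos).1 hB
    exact not_exists_mul_le_iff hM h01 h10 hDpos ha hb

theorem stmt_1 (p1 q1 p2 q2 : ℕ) (hp1 : 0 < p1) (hq2 : 0 < q2)
    (hD : q1 * p2 < p1 * q2)
    (M : Set (ℕ × ℕ)) (hM : (0, 0) ∉ M) :
    {pos : ℕ × ℕ | inBQ p1 q1 p2 q2 pos ∧ ¬ ∃ pos', QMove p1 q1 p2 q2 M pos pos'} =
      {pos : ℕ × ℕ | inTQ p1 q1 p2 q2 pos} ↔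
    ((0, 1) ∈ M ∧ (1, 0) ∈ M) :=
  stmt_1_general p1 q1 p2 q2 hD M hM
end

section
/- The set T_Q is finite and its cardinality equals D = p₁q₂ − q₁p₂. -/
/-!
In the coordinates `u = p₁Y − q₁X`, `v = q₂X − p₂Y` the set `T_Q` is `{z | adj(Q) z ∈ [0, D)²}` for
`Q = [[p₁, p₂], [q₁, q₂]]`: the lattice points of the half-open parallelogram spanned by the move
vectors. Since `adj(Q) Q = D`, translating by `Qℤ²` shifts `adj(Q) z` by `Dℤ²`, so these points
form a system of representatives of `ℤ² ⧸ Qℤ²`, a group of order `|det Q| = D`.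
-/

open Matrix

namespace Matrix

variable {ι : Type*} [Fintype ι] [DecidableEq ι]

/-- The integer points `Q t`, `t ∈ [0,1)ⁿ`, of the half-open parallelepiped spanned by the columns
of `Q`, written without division: `z = Q t` iff `adjugate Q *ᵥ z = Q.det • t`. -/
def parallelepipedPoints (Q : Matrix ι ι ℤ) : Set (ι → ℤ) :=
  {z | ∀ i, 0 ≤ (adjugate Q *ᵥ z) i ∧ (adjugate Q *ᵥ z) i < Q.det}

theorem adjugate_mulVec_mulVec (Q : Matrix ι ι ℤ) (k : ι → ℤ) :
    adjugate Q *ᵥ (Q *ᵥ k) = Q.det • k := by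
  rw [mulVec_mulVec, adjugate_mul, smul_mulVec, one_mulVec]

theorem eq_of_mem_parallelepipedPoints {Q : Matrix ι ι ℤ} (hQ : Q.det ≠ 0) {z w : ι → ℤ}
    (hz : z ∈ parallelepipedPoints Q) (hw : w ∈ parallelepipedPoints Q)
    (hzw : z - w ∈ LinearMap.range (toLin' Q)) : z = w := by
  obtain ⟨k, hk⟩ := hzw
  have hk0 : k = 0 := funext fun i ↦ by
    have hdiff : (adjugate Q *ᵥ z) i - (adjugate Q *ᵥ w) i = Q.det * k i := by
      rw [← Pi.sub_apply, ← mulVec_sub, ← hk, toLin'_apply, adjugate_mulVec_mulVec]; rfl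
    obtain ⟨hz0, hz1⟩ := hz i
    obtain ⟨hw0, hw1⟩ := hw i
    have hdk : Q.det * k i = 0 := Int.eq_zero_of_abs_lt_dvd (dvd_mul_right Q.det (k i))
      (by rw [← hdiff, abs_sub_lt_iff]; omega)
    exact (mul_eq_zero.1 hdk).resolve_left hQ
  rw [← sub_eq_zero, ← hk, hk0, map_zero]

theorem sub_mem_parallelepipedPoints {Q : Matrix ι ι ℤ} (hQ : 0 < Q.det) (z : ι → ℤ) :
    z - Q *ᵥ (fun i ↦ (adjugate Q *ᵥ z) i / Q.det) ∈ parallelepipedPoints Q := by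
  intro i
  rw [mulVec_sub, adjugate_mulVec_mulVec, Pi.sub_apply, Pi.smul_apply, smul_eq_mul,
    ← Int.emod_def]
  exact ⟨Int.emod_nonneg _ hQ.ne', Int.emod_lt_of_pos _ hQ⟩

theorem bijective_mk_parallelepipedPoints {Q : Matrix ι ι ℤ} (hQ : 0 < Q.det) :
    Function.Bijective fun z : parallelepipedPoints Q ↦
      Submodule.Quotient.mk (p := LinearMap.range (toLin' Q)) (z : ι → ℤ) := by
  refine ⟨fun z w hzw ↦ Subtype.ext ?_, ?_⟩
  · exact eq_of_mem_parallelepipedPoints hQ.ne' z.2 w.2 ((Submodule.Quotient.eq _).1 hzw)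
  · refine Submodule.Quotient.mk_surjective _ |>.forall.2 fun z ↦ ?_
    refine ⟨⟨_, sub_mem_parallelepipedPoints hQ z⟩, (Submodule.Quotient.eq _).2 ?_⟩
    simp

theorem natCard_quotient_range_toLin' (Q : Matrix ι ι ℤ) (hQ : Q.det ≠ 0) :
    Nat.card ((ι → ℤ) ⧸ LinearMap.range (toLin' Q)) = Q.det.natAbs := by
  let e := LinearEquiv.ofInjective (toLin' Q) (mulVec_injective_of_det_ne_zero hQ)
  rw [← Submodule.natAbs_det_equiv _ e, ← LinearMap.det_toLin' Q]
  rfl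

theorem natCard_parallelepipedPoints {Q : Matrix ι ι ℤ} (hQ : 0 < Q.det) :
    Nat.card (parallelepipedPoints Q) = Q.det.natAbs := by
  rw [Nat.card_eq_of_bijective _ (bijective_mk_parallelepipedPoints hQ),
    natCard_quotient_range_toLin' Q hQ.ne']

theorem nonneg_of_mem_parallelepipedPoints {Q : Matrix ι ι ℤ} (hQ : 0 < Q.det)
    (hQ₀ : ∀ i j, 0 ≤ Q i j) {z : ι → ℤ} (hz : z ∈ parallelepipedPoints Q) (i : ι) :
    0 ≤ z i := by
  have h : Q.det * z i = (Q *ᵥ (adjugate Q *ᵥ z)) i := by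
    rw [mulVec_mulVec, mul_adjugate, smul_mulVec, one_mulVec]; rfl
  refine nonneg_of_mul_nonneg_right (h ▸ ?_) hQ
  exact Finset.sum_nonneg fun j _ ↦ mul_nonneg (hQ₀ i j) (hz j).1

end Matrix

abbrev moveMatrix (p1 q1 p2 q2 : ℕ) : Matrix (Fin 2) (Fin 2) ℤ := !![(p1 : ℤ), p2; q1, q2]

theorem det_moveMatrix {p1 q1 p2 q2 : ℕ} (hD : q1 * p2 ≤ p1 * q2) :
    (moveMatrix p1 q1 p2 q2).det = ((p1 * q2 - q1 * p2 : ℕ) : ℤ) := by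
  rw [det_fin_two_of]; push_cast [hD]; ring

theorem adjugate_moveMatrix_mulVec (p1 q1 p2 q2 : ℕ) (x y : ℤ) :
    adjugate (moveMatrix p1 q1 p2 q2) *ᵥ ![x, y] = ![q2 * x - p2 * y, p1 * y - q1 * x] := by
  ext i; fin_cases i <;> simp [adjugate_fin_two_of] <;> ring

theorem inTQ_iff_mem_parallelepipedPoints (p1 q1 p2 q2 X Y : ℕ) :
    inTQ p1 q1 p2 q2 (X, Y) ↔ ![(X : ℤ), Y] ∈ (moveMatrix p1 q1 p2 q2).parallelepipedPoints := by
  simp only [inTQ, inBQ, parallelepipedPoints, Set.mem_ofPred_eq, adjugate_moveMatrix_mulVec,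
    det_fin_two_of, Fin.forall_fin_two, cons_val_zero, cons_val_one]
  zify
  constructor <;> rintro ⟨⟨h1, h2⟩, h3, h4⟩ <;> refine ⟨⟨?_, ?_⟩, ?_, ?_⟩ <;> linarith

theorem image_setOf_inTQ {p1 q1 p2 q2 : ℕ} (hD : q1 * p2 < p1 * q2) :
    (fun pos : ℕ × ℕ ↦ ![(pos.1 : ℤ), pos.2]) '' {pos | inTQ p1 q1 p2 q2 pos} =
      (moveMatrix p1 q1 p2 q2).parallelepipedPoints := by
  ext z
  constructor
  · rintro ⟨⟨X, Y⟩, h, rfl⟩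
    exact (inTQ_iff_mem_parallelepipedPoints p1 q1 p2 q2 X Y).1 h
  · intro hz
    have hz₀ := nonneg_of_mem_parallelepipedPoints
      (by rw [det_moveMatrix hD.le]; omega) (by simp [Fin.forall_fin_two]) hz
    have hz' : ![((z 0).toNat : ℤ), ((z 1).toNat : ℤ)] = z := by
      ext i; fin_cases i <;> simp [Int.toNat_of_nonneg (hz₀ _)]
    exact ⟨_, (inTQ_iff_mem_parallelepipedPoints ..).2 (hz' ▸ hz), hz'⟩

theorem stmt_2_general (p1 q1 p2 q2 : ℕ)
    (hD : q1 * p2 < p1 * q2) :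
    {pos : ℕ × ℕ | inTQ p1 q1 p2 q2 pos}.Finite ∧
      {pos : ℕ × ℕ | inTQ p1 q1 p2 q2 pos}.ncard = p1 * q2 - q1 * p2 := by
  have hQ := det_moveMatrix hD.le
  have hinj : Function.Injective fun pos : ℕ × ℕ ↦ ![(pos.1 : ℤ), pos.2] := fun a b h ↦
    Prod.ext (by simpa using congrFun h 0) (by simpa using congrFun h 1)
  have hcard : {pos : ℕ × ℕ | inTQ p1 q1 p2 q2 pos}.ncard = p1 * q2 - q1 * p2 := by
    rw [← Set.ncard_image_of_injective _ hinj, image_setOf_inTQ hD, ← Nat.card_coe_set_eq,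
      natCard_parallelepipedPoints (by rw [hQ]; omega), hQ, Int.natAbs_natCast]
  exact ⟨Set.finite_of_ncard_pos (by omega), hcard⟩

theorem stmt_2 (p1 q1 p2 q2 : ℕ) (hp1 : 0 < p1) (hq2 : 0 < q2)
    (hD : q1 * p2 < p1 * q2) :
    {pos : ℕ × ℕ | inTQ p1 q1 p2 q2 pos}.Finite ∧
      {pos : ℕ × ℕ | inTQ p1 q1 p2 q2 pos}.ncard = p1 * q2 - q1 * p2 :=
  stmt_2_general p1 q1 p2 q2 hD
end

section
/- Let (x,y) ∈ T_Q and let A, B be integers. Then the pair (x + A·p₁ + B·p₂, y + A·q₁ + B·q₂) lies in B_Q (in particular both coordinates are nonnegative) if and only if A ≥ 0 and B ≥ 0. -/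
theorem Int.add_mul_nonneg_iff_of_nonneg_of_lt {u d b : ℤ} (hu : 0 ≤ u) (hud : u < d) :
    0 ≤ u + b * d ↔ 0 ≤ b := by
  constructor
  · intro h
    by_contra! hb
    nlinarith [Int.le_sub_one_iff.mpr hb]
  · intro hb
    nlinarith

namespace inTQ

variable {p1 q1 p2 q2 x y : ℕ}

theorem slack_left (h : inTQ p1 q1 p2 q2 (x, y)) :
    0 ≤ (y * p1 - x * q1 : ℤ) ∧ (y * p1 - x * q1 : ℤ) < p1 * q2 - q1 * p2 := by
  obtain ⟨⟨hB, -⟩, hT, -⟩ := h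
  have hB' : (x * q1 : ℤ) ≤ y * p1 := by exact_mod_cast hB
  constructor <;> linarith

theorem slack_right (h : inTQ p1 q1 p2 q2 (x, y)) :
    0 ≤ (x * q2 - y * p2 : ℤ) ∧ (x * q2 - y * p2 : ℤ) < p1 * q2 - q1 * p2 := by
  obtain ⟨⟨-, hB⟩, -, hT⟩ := h
  have hB' : (y * p2 : ℤ) ≤ x * q2 := by exact_mod_cast hB
  constructor <;> linarith

end inTQ

theorem stmt_3_general (p1 q1 p2 q2 : ℕ)
    (x y : ℕ) (hxy : inTQ p1 q1 p2 q2 (x, y)) (A B : ℤ) :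
    (0 ≤ (x : ℤ) + A * p1 + B * p2 ∧ 0 ≤ (y : ℤ) + A * q1 + B * q2 ∧
      ((x : ℤ) + A * p1 + B * p2) * q1 ≤ ((y : ℤ) + A * q1 + B * q2) * p1 ∧
      ((y : ℤ) + A * q1 + B * q2) * p2 ≤ ((x : ℤ) + A * p1 + B * p2) * q2) ↔
    (0 ≤ A ∧ 0 ≤ B) := by
  obtain ⟨hu₀, hu⟩ := hxy.slack_left
  obtain ⟨hv₀, hv⟩ := hxy.slack_right
  have hA := Int.add_mul_nonneg_iff_of_nonneg_of_lt (b := A) hv₀ hv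
  have hB := Int.add_mul_nonneg_iff_of_nonneg_of_lt (b := B) hu₀ hu
  have shift_left : ((y : ℤ) + A * q1 + B * q2) * p1 - ((x : ℤ) + A * p1 + B * p2) * q1
      = (y * p1 - x * q1) + B * (p1 * q2 - q1 * p2) := by ring
  have shift_right : ((x : ℤ) + A * p1 + B * p2) * q2 - ((y : ℤ) + A * q1 + B * q2) * p2
      = (x * q2 - y * p2) + A * (p1 * q2 - q1 * p2) := by ring
  constructor
  · rintro ⟨-, -, hleft, hright⟩
    exact ⟨hA.1 (by linarith), hB.1 (by linarith)⟩
  · rintro ⟨hA₀, hB₀⟩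
    refine ⟨by positivity, by positivity, ?_, ?_⟩
    · linarith [hB.2 hB₀]
    · linarith [hA.2 hA₀]

theorem stmt_3 (p1 q1 p2 q2 : ℕ) (hp1 : 0 < p1) (hq2 : 0 < q2)
    (hD : q1 * p2 < p1 * q2)
    (x y : ℕ) (hxy : inTQ p1 q1 p2 q2 (x, y)) (A B : ℤ) :
    (0 ≤ (x : ℤ) + A * p1 + B * p2 ∧ 0 ≤ (y : ℤ) + A * q1 + B * q2 ∧
      ((x : ℤ) + A * p1 + B * p2) * q1 ≤ ((y : ℤ) + A * q1 + B * q2) * p1 ∧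
      ((y : ℤ) + A * q1 + B * q2) * p2 ≤ ((x : ℤ) + A * p1 + B * p2) * q2) ↔
    (0 ≤ A ∧ 0 ≤ B) :=
  stmt_3_general p1 q1 p2 q2 x y hxy A B
end

section
/- Every position (X,Y) ∈ B_Q can be written as (X,Y) = (x + A·p₁ + B·p₂, y + A·q₁ + B·q₂) for some (x,y) ∈ T_Q and some nonnegative integers A and B, and this representation is unique: if (x + A·p₁ + B·p₂, y + A·q₁ + B·q₂) = (x' + A'·p₁ + B'·p₂, y' + A'·q₁ + B'·q₂) with (x,y),(x',y') ∈ T_Q and A,B,A',B' ∈ ℕ, then (x,y) = (x',y'), A = A' and B = B'. -/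
/-!
In the coordinates `u = x q₂ - y p₂` and `v = y p₁ - x q₁`, the set `B_Q` is the quadrant
`u, v ≥ 0`, the set `T_Q` is the square `0 ≤ u, v < D`, and adding `(p₁, q₁)` (resp. `(p₂, q₂)`)
to a position adds `D` to `u` (resp. `v`). So the representation is Euclidean division of `u` and
`v` by `D`. The position is recovered from `D x = p₁ u + p₂ v` and `D y = q₁ u + q₂ v`, which also
shows that the remainder position has nonnegative entries.
-/

theorem Int.eq_of_add_mul_eq_of_mem_Ico {D r r' A A' : ℤ} (hr : r ∈ Set.Ico 0 D)
    (hr' : r' ∈ Set.Ico 0 D) (h : r + D * A = r' + D * A') : A = A' := by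
  have hD : 0 < D := hr.1.trans_lt hr.2
  exact ((Int.ediv_emod_unique hD).2 ⟨rfl, hr.1, hr.2⟩).1.symm.trans
    ((Int.ediv_emod_unique hD).2 ⟨h.symm, hr'.1, hr'.2⟩).1

namespace QGame

def det (p1 q1 p2 q2 : ℕ) : ℤ := p1 * q2 - q1 * p2

def coord₁ (p2 q2 : ℕ) (x y : ℤ) : ℤ := x * q2 - y * p2

def coord₂ (p1 q1 : ℕ) (x y : ℤ) : ℤ := y * p1 - x * q1

variable {p1 q1 p2 q2 : ℕ}

theorem coord₁_add_mul (x y A B : ℤ) :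
    coord₁ p2 q2 (x + A * p1 + B * p2) (y + A * q1 + B * q2) =
      coord₁ p2 q2 x y + det p1 q1 p2 q2 * A := by
  simp only [coord₁, det]; ring

theorem coord₂_add_mul (x y A B : ℤ) :
    coord₂ p1 q1 (x + A * p1 + B * p2) (y + A * q1 + B * q2) =
      coord₂ p1 q1 x y + det p1 q1 p2 q2 * B := by
  simp only [coord₂, det]; ring

theorem det_mul_fst (x y : ℤ) :
    det p1 q1 p2 q2 * x = p1 * coord₁ p2 q2 x y + p2 * coord₂ p1 q1 x y := by
  simp only [coord₁, coord₂, det]; ring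

theorem det_mul_snd (x y : ℤ) :
    det p1 q1 p2 q2 * y = q1 * coord₁ p2 q2 x y + q2 * coord₂ p1 q1 x y := by
  simp only [coord₁, coord₂, det]; ring

theorem inBQ_iff {x y : ℕ} :
    inBQ p1 q1 p2 q2 (x, y) ↔ 0 ≤ coord₁ p2 q2 x y ∧ 0 ≤ coord₂ p1 q1 x y := by
  simp only [inBQ, coord₁, coord₂]; omega

theorem inTQ_iff {x y : ℕ} :
    inTQ p1 q1 p2 q2 (x, y) ↔
      coord₁ p2 q2 x y ∈ Set.Ico 0 (det p1 q1 p2 q2) ∧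
        coord₂ p1 q1 x y ∈ Set.Ico 0 (det p1 q1 p2 q2) := by
  simp only [inTQ, inBQ_iff, coord₁, coord₂, det, Set.mem_Ico]
  constructor
  · rintro ⟨⟨hu, hv⟩, hv', hu'⟩
    exact ⟨⟨hu, by linarith⟩, hv, by linarith⟩
  · rintro ⟨⟨hu, hu'⟩, hv, hv'⟩
    exact ⟨⟨hu, hv⟩, by linarith, by linarith⟩

theorem exists_inTQ_add_mul (hD : 0 < det p1 q1 p2 q2) {X Y : ℕ}
    (hXY : inBQ p1 q1 p2 q2 (X, Y)) :
    ∃ x y A B : ℕ, inTQ p1 q1 p2 q2 (x, y) ∧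
      X = x + A * p1 + B * p2 ∧ Y = y + A * q1 + B * q2 := by
  rw [inBQ_iff] at hXY
  obtain ⟨A, hA⟩ := Int.eq_ofNat_of_zero_le (Int.ediv_nonneg hXY.1 hD.le)
  obtain ⟨B, hB⟩ := Int.eq_ofNat_of_zero_le (Int.ediv_nonneg hXY.2 hD.le)
  obtain ⟨x, hX⟩ : ∃ x : ℤ, (X : ℤ) = x + A * p1 + B * p2 := ⟨X - A * p1 - B * p2, by ring⟩
  obtain ⟨y, hY⟩ : ∃ y : ℤ, (Y : ℤ) = y + A * q1 + B * q2 := ⟨Y - A * q1 - B * q2, by ring⟩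
  have hu : coord₁ p2 q2 x y ∈ Set.Ico 0 (det p1 q1 p2 q2) := by
    have : coord₁ p2 q2 x y = coord₁ p2 q2 X Y % det p1 q1 p2 q2 := by
      rw [Int.emod_def, hA, hX, hY, coord₁_add_mul]; ring
    exact this ▸ ⟨Int.emod_nonneg _ hD.ne', Int.emod_lt_of_pos _ hD⟩
  have hv : coord₂ p1 q1 x y ∈ Set.Ico 0 (det p1 q1 p2 q2) := by
    have : coord₂ p1 q1 x y = coord₂ p1 q1 X Y % det p1 q1 p2 q2 := by
      rw [Int.emod_def, hB, hX, hY, coord₂_add_mul]; ring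
    exact this ▸ ⟨Int.emod_nonneg _ hD.ne', Int.emod_lt_of_pos _ hD⟩
  have hx : 0 ≤ det p1 q1 p2 q2 * x := by
    rw [det_mul_fst x y]
    exact add_nonneg (mul_nonneg (by positivity) hu.1) (mul_nonneg (by positivity) hv.1)
  have hy : 0 ≤ det p1 q1 p2 q2 * y := by
    rw [det_mul_snd x y]
    exact add_nonneg (mul_nonneg (by positivity) hu.1) (mul_nonneg (by positivity) hv.1)
  obtain ⟨x, rfl⟩ := Int.eq_ofNat_of_zero_le (nonneg_of_mul_nonneg_right hx hD)
  obtain ⟨y, rfl⟩ := Int.eq_ofNat_of_zero_le (nonneg_of_mul_nonneg_right hy hD)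
  exact ⟨x, y, A, B, inTQ_iff.2 ⟨hu, hv⟩, by exact_mod_cast hX, by exact_mod_cast hY⟩

theorem eq_of_inTQ_of_add_mul_eq {x y A B x' y' A' B' : ℕ}
    (hT : inTQ p1 q1 p2 q2 (x, y)) (hT' : inTQ p1 q1 p2 q2 (x', y'))
    (hX : x + A * p1 + B * p2 = x' + A' * p1 + B' * p2)
    (hY : y + A * q1 + B * q2 = y' + A' * q1 + B' * q2) :
    x = x' ∧ y = y' ∧ A = A' ∧ B = B' := by
  rw [inTQ_iff] at hT hT'
  have hXz : (x + A * p1 + B * p2 : ℤ) = x' + A' * p1 + B' * p2 := by exact_mod_cast hX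
  have hYz : (y + A * q1 + B * q2 : ℤ) = y' + A' * q1 + B' * q2 := by exact_mod_cast hY
  have hA : (A : ℤ) = A' := Int.eq_of_add_mul_eq_of_mem_Ico hT.1 hT'.1 <| by
    rw [← coord₁_add_mul, ← coord₁_add_mul, hXz, hYz]
  have hB : (B : ℤ) = B' := Int.eq_of_add_mul_eq_of_mem_Ico hT.2 hT'.2 <| by
    rw [← coord₂_add_mul, ← coord₂_add_mul, hXz, hYz]
  obtain rfl : A = A' := by exact_mod_cast hA
  obtain rfl : B = B' := by exact_mod_cast hB
  omega

end QGame

theorem stmt_4_general (p1 q1 p2 q2 : ℕ)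
    (hD : q1 * p2 < p1 * q2)
    (X Y : ℕ) (hXY : inBQ p1 q1 p2 q2 (X, Y)) :
    (∃ x y A B : ℕ, inTQ p1 q1 p2 q2 (x, y) ∧
        X = x + A * p1 + B * p2 ∧ Y = y + A * q1 + B * q2) ∧
      (∀ x y A B x' y' A' B' : ℕ,
        inTQ p1 q1 p2 q2 (x, y) → inTQ p1 q1 p2 q2 (x', y') →
        X = x + A * p1 + B * p2 → Y = y + A * q1 + B * q2 →
        X = x' + A' * p1 + B' * p2 → Y = y' + A' * q1 + B' * q2 →
        x = x' ∧ y = y' ∧ A = A' ∧ B = B') := by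
  have hdet : 0 < QGame.det p1 q1 p2 q2 := by simp only [QGame.det]; omega
  refine ⟨QGame.exists_inTQ_add_mul hdet hXY, ?_⟩
  intro x y A B x' y' A' B' hT hT' hX hY hX' hY'
  exact QGame.eq_of_inTQ_of_add_mul_eq hT hT' (hX.symm.trans hX') (hY.symm.trans hY')

theorem stmt_4 (p1 q1 p2 q2 : ℕ) (hp1 : 0 < p1) (hq2 : 0 < q2)
    (hD : q1 * p2 < p1 * q2)
    (X Y : ℕ) (hXY : inBQ p1 q1 p2 q2 (X, Y)) :
    (∃ x y A B : ℕ, inTQ p1 q1 p2 q2 (x, y) ∧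
        X = x + A * p1 + B * p2 ∧ Y = y + A * q1 + B * q2) ∧
      (∀ x y A B x' y' A' B' : ℕ,
        inTQ p1 q1 p2 q2 (x, y) → inTQ p1 q1 p2 q2 (x', y') →
        X = x + A * p1 + B * p2 → Y = y + A * q1 + B * q2 →
        X = x' + A' * p1 + B' * p2 → Y = y' + A' * q1 + B' * q2 →
        x = x' ∧ y = y' ∧ A = A' ∧ B = B') :=
  stmt_4_general p1 q1 p2 q2 hD X Y hXY
end

section
/- Let M ⊆ ℕ² \ {(0,0)} and suppose there is a legal move in the Q-subtraction game G_Q(M) from (X,Y) ∈ B_Q via some (s,t) ∈ M. Write (X,Y) = (x + A·p₁ + B·p₂, y + A·q₁ + B·q₂) with (x,y) ∈ T_Q and A,B ∈ ℕ (such a representation exists and is unique). Then A ≥ s and B ≥ t, so (A,B) → (A−s, B−t) is a legal move in the subtraction game G(M), and the target of the move from (X,Y) equals (x + (A−s)·p₁ + (B−t)·p₂, y + (A−s)·q₁ + (B−t)·q₂). -/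
/-!
By Cramer's rule, `a(X, Y) = X q₂ - Y p₂` and `b(X, Y) = Y p₁ - X q₁` are `D` times the
coordinates of `(X, Y)` in the basis `(p₁, q₁), (p₂, q₂)`. A position lies in `B_Q` exactly when
both are nonnegative, and a point of `T_Q` moreover has both below `D`. Hence
`a(X, Y) = a(x, y) + A D` with `0 ≤ a(x, y) < D`, and the target of the move has
`a = a(x, y) + (A - s) D ≥ 0`, which forces `A - s > -1`; likewise for `b`, `B` and `t`.
-/

section Coordinates

variable (p1 q1 p2 q2 : ℕ)

def coordA (X Y : ℤ) : ℤ := X * q2 - Y * p2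

def coordB (X Y : ℤ) : ℤ := Y * p1 - X * q1

theorem coordA_add (x y A B : ℤ) :
    coordA p2 q2 (x + A * p1 + B * p2) (y + A * q1 + B * q2) =
      coordA p2 q2 x y + A * (p1 * q2 - q1 * p2) := by
  unfold coordA; ring

theorem coordB_add (x y A B : ℤ) :
    coordB p1 q1 (x + A * p1 + B * p2) (y + A * q1 + B * q2) =
      coordB p1 q1 x y + B * (p1 * q2 - q1 * p2) := by
  unfold coordB; ring

variable {p1 q1 p2 q2}

theorem inBQ_iff_coord_nonneg {X Y : ℕ} :
    inBQ p1 q1 p2 q2 (X, Y) ↔ 0 ≤ coordA p2 q2 X Y ∧ 0 ≤ coordB p1 q1 X Y := by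
  simp only [inBQ, coordA, coordB, sub_nonneg]
  constructor
  · rintro ⟨h₁, h₂⟩; exact ⟨by exact_mod_cast h₂, by exact_mod_cast h₁⟩
  · rintro ⟨h₁, h₂⟩; exact ⟨by exact_mod_cast h₂, by exact_mod_cast h₁⟩

theorem inTQ.coord_lt {x y : ℕ} (h : inTQ p1 q1 p2 q2 (x, y)) :
    coordA p2 q2 x y < p1 * q2 - q1 * p2 ∧ coordB p1 q1 x y < p1 * q2 - q1 * p2 := by
  obtain ⟨-, h₁, h₂⟩ := h
  simp only [coordA, coordB]
  constructor <;> linarith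

end Coordinates

theorem Int.le_of_nonneg_add_sub_mul {D r s A : ℤ} (hD : 0 < D) (hr : r < D)
    (h : 0 ≤ r + (A - s) * D) : s ≤ A := by
  by_contra! hAs
  nlinarith

theorem stmt_6_general (p1 q1 p2 q2 : ℕ)
    (hD : q1 * p2 < p1 * q2) (X Y : ℕ) (s t : ℕ)
    (hs : p1 * s + p2 * t ≤ X) (ht : q1 * s + q2 * t ≤ Y)
    (htarget : inBQ p1 q1 p2 q2 (X - (p1 * s + p2 * t), Y - (q1 * s + q2 * t)))
    (x y A B : ℕ) (hxy : inTQ p1 q1 p2 q2 (x, y))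
    (hX : X = x + A * p1 + B * p2) (hY : Y = y + A * q1 + B * q2) :
    s ≤ A ∧ t ≤ B ∧
      X - (p1 * s + p2 * t) = x + (A - s) * p1 + (B - t) * p2 ∧
      Y - (q1 * s + q2 * t) = y + (A - s) * q1 + (B - t) * q2 := by
  have hDpos : (0 : ℤ) < p1 * q2 - q1 * p2 := sub_pos.2 (by exact_mod_cast hD)
  have hX' : ((X - (p1 * s + p2 * t) : ℕ) : ℤ) = x + (A - s : ℤ) * p1 + (B - t : ℤ) * p2 := by
    rw [Nat.cast_sub hs]; push_cast [hX]; ring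
  have hY' : ((Y - (q1 * s + q2 * t) : ℕ) : ℤ) = y + (A - s : ℤ) * q1 + (B - t : ℤ) * q2 := by
    rw [Nat.cast_sub ht]; push_cast [hY]; ring
  obtain ⟨ha, hb⟩ := inBQ_iff_coord_nonneg.1 htarget
  rw [hX', hY', coordA_add] at ha
  rw [hX', hY', coordB_add] at hb
  obtain ⟨hxa, hyb⟩ := hxy.coord_lt
  have hsA := Int.le_of_nonneg_add_sub_mul hDpos hxa ha
  have htB := Int.le_of_nonneg_add_sub_mul hDpos hyb hb
  norm_cast at hsA htB
  refine ⟨hsA, htB, ?_, ?_⟩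
  · zify [hs, hsA, htB] at hX' ⊢; exact hX'
  · zify [ht, hsA, htB] at hY' ⊢; exact hY'

theorem stmt_6 (p1 q1 p2 q2 : ℕ) (hp1 : 0 < p1) (hq2 : 0 < q2)
    (hD : q1 * p2 < p1 * q2)
    (M : Set (ℕ × ℕ)) (hM : (0, 0) ∉ M)
    (X Y : ℕ) (hXY : inBQ p1 q1 p2 q2 (X, Y))
    (s t : ℕ) (hst : (s, t) ∈ M)
    (hs : p1 * s + p2 * t ≤ X) (ht : q1 * s + q2 * t ≤ Y)
    (htarget : inBQ p1 q1 p2 q2 (X - (p1 * s + p2 * t), Y - (q1 * s + q2 * t)))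
    (x y A B : ℕ) (hxy : inTQ p1 q1 p2 q2 (x, y))
    (hX : X = x + A * p1 + B * p2) (hY : Y = y + A * q1 + B * q2) :
    s ≤ A ∧ t ≤ B ∧
      X - (p1 * s + p2 * t) = x + (A - s) * p1 + (B - t) * p2 ∧
      Y - (q1 * s + q2 * t) = y + (A - s) * q1 + (B - t) * q2 :=
  stmt_6_general p1 q1 p2 q2 hD X Y s t hs ht htarget x y A B hxy hX hY
end

section
/- (Main theorem, first form.) Let M ⊆ ℕ² \ {(0,0)} and let (X,Y) ∈ B_Q. Then (X,Y) is a P-position of the Q-subtraction game G_Q(M) if and only if φ_Q(X,Y) is a P-position of the subtraction game G(M). -/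
/-- `pos` is a P-position of the game with move relation `move`: every legal move
leads to a non-P-position.  (Every legal move of the games considered here strictly
decreases the coordinate sum, which makes the recursion well-founded.) -/
def PPos (move : ℕ × ℕ → ℕ × ℕ → Prop) : ℕ × ℕ → Prop
  | pos => ∀ pos', move pos pos' → pos'.1 + pos'.2 < pos.1 + pos.2 → ¬ PPos move pos'
termination_by pos => pos.1 + pos.2

/-- The map `φ_Q`, using floor division of integers. -/
def phiQ (p1 q1 p2 q2 : ℕ) (pos : ℕ × ℕ) : ℤ × ℤ :=
  (Int.fdiv ((pos.1 : ℤ) * q2 - (pos.2 : ℤ) * p2) ((p1 : ℤ) * q2 - (q1 : ℤ) * p2),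
   Int.fdiv ((pos.2 : ℤ) * p1 - (pos.1 : ℤ) * q1) ((p1 : ℤ) * q2 - (q1 : ℤ) * p2))

lemma pPos_iff_of_decreasing {move : ℕ × ℕ → ℕ × ℕ → Prop}
    (hdec : ∀ p q, move p q → q.1 + q.2 < p.1 + p.2) (p : ℕ × ℕ) :
    PPos move p ↔ ∀ q, move p q → ¬ PPos move q := by
  rw [PPos]
  exact forall_congr' fun q => ⟨fun h hm => h hm (hdec p q hm), fun h hm _ => h hm⟩

theorem pPos_iff_pPos_of_moves {move move' : ℕ × ℕ → ℕ × ℕ → Prop} (S : Set (ℕ × ℕ))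
    (f : ℕ × ℕ → ℕ × ℕ)
    (hdec : ∀ p q, move p q → q.1 + q.2 < p.1 + p.2)
    (hdec' : ∀ p q, move' p q → q.1 + q.2 < p.1 + p.2)
    (forth : ∀ p ∈ S, ∀ q, move p q → q ∈ S ∧ move' (f p) (f q))
    (back : ∀ p ∈ S, ∀ q, move' (f p) q → ∃ p', move p p' ∧ f p' = q) :
    ∀ p ∈ S, (PPos move p ↔ PPos move' (f p)) := by
  intro p
  induction h : p.1 + p.2 using Nat.strong_induction_on generalizing p with
  | _ n ih =>
  intro hp
  have ih' : ∀ p', move p p' → p' ∈ S → (PPos move p' ↔ PPos move' (f p')) :=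
    fun p' hm hp' => ih _ (h ▸ hdec p p' hm) p' rfl hp'
  rw [pPos_iff_of_decreasing hdec, pPos_iff_of_decreasing hdec']
  constructor
  · intro hP q hm hq
    obtain ⟨p', hm', rfl⟩ := back p hp q hm
    exact hP p' hm' ((ih' p' hm' (forth p hp p' hm').1).mpr hq)
  · intro hP p' hm hp'
    obtain ⟨hS, hm'⟩ := forth p hp p' hm
    exact hP (f p') hm' ((ih' p' hm hS).mp hp')

section QGame

variable {p1 q1 p2 q2 : ℕ} {M : Set (ℕ × ℕ)}

lemma QMove.sum_lt (hp1 : 0 < p1) (hq2 : 0 < q2) (hM : (0, 0) ∉ M) {pos pos' : ℕ × ℕ}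
    (h : QMove p1 q1 p2 q2 M pos pos') : pos'.1 + pos'.2 < pos.1 + pos.2 := by
  obtain ⟨s, t, hst, hu, hv, h1, h2, -⟩ := h
  have : 0 < p1 * s + q2 * t := by
    rcases Nat.eq_zero_or_pos s with rfl | hs
    · have : 0 < t := Nat.pos_of_ne_zero (by rintro rfl; exact hM hst)
      positivity
    · positivity
  omega

lemma QMove.inBQ {pos pos' : ℕ × ℕ} (h : QMove p1 q1 p2 q2 M pos pos') :
    inBQ p1 q1 p2 q2 pos' :=
  let ⟨_, _, _, _, _, _, _, hB⟩ := h
  hB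

lemma gMove_iff {A B : ℕ} {pos' : ℕ × ℕ} :
    QMove 1 0 0 1 M (A, B) pos' ↔
      ∃ s t : ℕ, (s, t) ∈ M ∧ s ≤ A ∧ t ≤ B ∧ pos' = (A - s, B - t) := by
  constructor
  · rintro ⟨s, t, hst, h1, h2, h3, h4, -⟩
    simp only [one_mul, zero_mul, add_zero, zero_add] at h1 h2 h3 h4
    exact ⟨s, t, hst, h1, h2, Prod.ext h3 h4⟩
  · rintro ⟨s, t, hst, hs, ht, rfl⟩
    exact ⟨s, t, hst, by simpa, by simpa, by simp, by simp, by simp [inBQ]⟩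

lemma det_pos (hD : q1 * p2 < p1 * q2) : (0 : ℤ) < p1 * q2 - q1 * p2 :=
  sub_pos.mpr (by exact_mod_cast hD)

lemma inBQ_iff_phiQ_nonneg (hD : q1 * p2 < p1 * q2) (pos : ℕ × ℕ) :
    inBQ p1 q1 p2 q2 pos ↔ 0 ≤ (phiQ p1 q1 p2 q2 pos).1 ∧ 0 ≤ (phiQ p1 q1 p2 q2 pos).2 := by
  simp only [inBQ, phiQ, Int.fdiv_eq_ediv_of_nonneg _ (det_pos hD).le,
    Int.ediv_nonneg_iff_of_pos (det_pos hD), sub_nonneg]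
  rw [and_comm]
  norm_cast

lemma phiQ_sub (hD : q1 * p2 < p1 * q2) {pos : ℕ × ℕ} {s t : ℕ}
    (hu : p1 * s + p2 * t ≤ pos.1) (hv : q1 * s + q2 * t ≤ pos.2) :
    phiQ p1 q1 p2 q2 (pos.1 - (p1 * s + p2 * t), pos.2 - (q1 * s + q2 * t)) =
      phiQ p1 q1 p2 q2 pos - ((s : ℤ), (t : ℤ)) := by
  have hD0 : (p1 * q2 - q1 * p2 : ℤ) ≠ 0 := (det_pos hD).ne'
  simp only [phiQ, Int.fdiv_eq_ediv_of_nonneg _ (det_pos hD).le, Prod.mk_sub_mk]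
  push_cast [Nat.cast_sub hu, Nat.cast_sub hv]
  congr 1
  · rw [← Int.sub_mul_ediv_right _ _ hD0]
    ring_nf
  · rw [← Int.sub_mul_ediv_right _ _ hD0]
    ring_nf

lemma add_le_of_le_phiQ (hD : q1 * p2 < p1 * q2) {pos : ℕ × ℕ} {s t : ℕ}
    (hs : (s : ℤ) ≤ (phiQ p1 q1 p2 q2 pos).1) (ht : (t : ℤ) ≤ (phiQ p1 q1 p2 q2 pos).2) :
    p1 * s + p2 * t ≤ pos.1 ∧ q1 * s + q2 * t ≤ pos.2 := by
  simp only [phiQ, Int.fdiv_eq_ediv_of_nonneg _ (det_pos hD).le,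
    Int.le_ediv_iff_mul_le (det_pos hD)] at hs ht
  -- `D • pos = N₁ • (p₁, q₁) + N₂ • (p₂, q₂)`, where `N` is the numerator of `φ_Q pos`.
  constructor
  · suffices ((p1 * s + p2 * t : ℕ) : ℤ) ≤ pos.1 by exact_mod_cast this
    refine le_of_mul_le_mul_right ?_ (det_pos hD)
    push_cast
    linarith [mul_le_mul_of_nonneg_left hs (Int.natCast_nonneg p1),
      mul_le_mul_of_nonneg_left ht (Int.natCast_nonneg p2)]
  · suffices ((q1 * s + q2 * t : ℕ) : ℤ) ≤ pos.2 by exact_mod_cast this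
    refine le_of_mul_le_mul_right ?_ (det_pos hD)
    push_cast
    linarith [mul_le_mul_of_nonneg_left hs (Int.natCast_nonneg q1),
      mul_le_mul_of_nonneg_left ht (Int.natCast_nonneg q2)]

lemma qMove_iff (hD : q1 * p2 < p1 * q2) {pos pos' : ℕ × ℕ} :
    QMove p1 q1 p2 q2 M pos pos' ↔
      ∃ s t : ℕ, (s, t) ∈ M ∧ (s : ℤ) ≤ (phiQ p1 q1 p2 q2 pos).1 ∧
        (t : ℤ) ≤ (phiQ p1 q1 p2 q2 pos).2 ∧
        pos' = (pos.1 - (p1 * s + p2 * t), pos.2 - (q1 * s + q2 * t)) := by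
  constructor
  · rintro ⟨s, t, hst, hu, hv, h1, h2, hB⟩
    obtain rfl : pos' = (pos.1 - _, pos.2 - _) := Prod.ext h1 h2
    rw [inBQ_iff_phiQ_nonneg hD, phiQ_sub hD hu hv] at hB
    simp only [Prod.fst_sub, Prod.snd_sub, sub_nonneg] at hB
    exact ⟨s, t, hst, hB.1, hB.2, rfl⟩
  · rintro ⟨s, t, hst, hs, ht, rfl⟩
    obtain ⟨hu, hv⟩ := add_le_of_le_phiQ hD hs ht
    refine ⟨s, t, hst, hu, hv, rfl, rfl, ?_⟩
    rw [inBQ_iff_phiQ_nonneg hD, phiQ_sub hD hu hv]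
    simpa only [Prod.fst_sub, Prod.snd_sub, sub_nonneg] using ⟨hs, ht⟩

variable (p1 q1 p2 q2) in
def phiQNat (pos : ℕ × ℕ) : ℕ × ℕ :=
  ((phiQ p1 q1 p2 q2 pos).1.toNat, (phiQ p1 q1 p2 q2 pos).2.toNat)

lemma gMove_phiQNat_of_qMove (hD : q1 * p2 < p1 * q2) {pos pos' : ℕ × ℕ}
    (h : QMove p1 q1 p2 q2 M pos pos') :
    QMove 1 0 0 1 M (phiQNat p1 q1 p2 q2 pos) (phiQNat p1 q1 p2 q2 pos') := by
  obtain ⟨s, t, hst, hs, ht, rfl⟩ := (qMove_iff hD).1 h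
  obtain ⟨hu, hv⟩ := add_le_of_le_phiQ hD hs ht
  refine gMove_iff.2 ⟨s, t, hst, by omega, by omega, ?_⟩
  simp only [phiQNat, phiQ_sub hD hu hv, Prod.fst_sub, Prod.snd_sub]
  ext <;> omega

lemma exists_qMove_of_gMove (hD : q1 * p2 < p1 * q2) {pos q : ℕ × ℕ}
    (hpos : inBQ p1 q1 p2 q2 pos) (h : QMove 1 0 0 1 M (phiQNat p1 q1 p2 q2 pos) q) :
    ∃ pos', QMove p1 q1 p2 q2 M pos pos' ∧ phiQNat p1 q1 p2 q2 pos' = q := by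
  obtain ⟨s, t, hst, hs, ht, rfl⟩ := gMove_iff.1 h
  rw [inBQ_iff_phiQ_nonneg hD] at hpos
  have hs' : (s : ℤ) ≤ (phiQ p1 q1 p2 q2 pos).1 := by omega
  have ht' : (t : ℤ) ≤ (phiQ p1 q1 p2 q2 pos).2 := by omega
  obtain ⟨hu, hv⟩ := add_le_of_le_phiQ hD hs' ht'
  refine ⟨_, (qMove_iff hD).2 ⟨s, t, hst, hs', ht', rfl⟩, ?_⟩
  simp only [phiQNat, phiQ_sub hD hu hv, Prod.fst_sub, Prod.snd_sub]
  ext <;> omega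

end QGame

/-- The subtraction game `G(M)` is the Q-subtraction game with `p₁ = q₂ = 1`,
`q₁ = p₂ = 0` (there the `B_Q`-constraint is vacuous). -/
theorem stmt_8 (p1 q1 p2 q2 : ℕ) (hp1 : 0 < p1) (hq2 : 0 < q2)
    (hD : q1 * p2 < p1 * q2)
    (M : Set (ℕ × ℕ)) (hM : (0, 0) ∉ M)
    (X Y : ℕ) (hXY : inBQ p1 q1 p2 q2 (X, Y)) :
    PPos (QMove p1 q1 p2 q2 M) (X, Y) ↔
      PPos (QMove 1 0 0 1 M)
        ((phiQ p1 q1 p2 q2 (X, Y)).1.toNat, (phiQ p1 q1 p2 q2 (X, Y)).2.toNat) :=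
  pPos_iff_pPos_of_moves {pos | inBQ p1 q1 p2 q2 pos} (phiQNat p1 q1 p2 q2)
    (fun _ _ => QMove.sum_lt hp1 hq2 hM) (fun _ _ => QMove.sum_lt one_pos one_pos hM)
    (fun _ _ _ h => ⟨h.inBQ, gMove_phiQNat_of_qMove hD h⟩)
    (fun _ hpos _ h => exists_qMove_of_gMove hD hpos h) (X, Y) hXY
end

section
/- (Main theorem, second form.) Let M ⊆ ℕ² \ {(0,0)} and let A, B be nonnegative integers. Then (A,B) is a P-position of the subtraction game G(M) if and only if for all (x,y) ∈ T_Q, the position (x + A·p₁ + B·p₂, y + A·q₁ + B·q₂) is a P-position of the Q-subtraction game G_Q(M). -/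
/-! The map `(A, B) ↦ (x, y) + A • (p₁, q₁) + B • (p₂, q₂)` sends the subtraction game `G(M)`
isomorphically onto the part of `G_Q(M)` above a corner `(x, y) ∈ T_Q`: a move `(s, t)` from
`(A, B)` becomes the move `(s, t)` from its image, and conversely the inequalities defining `T_Q`
force any move from the image that stays in `B_Q` to satisfy `s ≤ A` and `t ≤ B`.  So P-positions
correspond, and the corner `(0, 0) ∈ T_Q` gives the converse. -/

def DecreasesSum (move : ℕ × ℕ → ℕ × ℕ → Prop) : Prop :=
  ∀ pos pos', move pos pos' → pos'.1 + pos'.2 < pos.1 + pos.2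

lemma PPos_iff_of_decreasesSum {move : ℕ × ℕ → ℕ × ℕ → Prop} (hmove : DecreasesSum move)
    (pos : ℕ × ℕ) :
    PPos move pos ↔ ∀ pos', move pos pos' → ¬ PPos move pos' := by
  rw [PPos]
  exact forall_congr' fun pos' => ⟨fun h hm => h hm (hmove _ _ hm), fun h hm _ => h hm⟩

lemma PPos_map_iff {move move' : ℕ × ℕ → ℕ × ℕ → Prop}
    (hmove : DecreasesSum move) (hmove' : DecreasesSum move')
    (f : ℕ × ℕ → ℕ × ℕ) (hf : ∀ pos r, move' (f pos) r ↔ ∃ pos', move pos pos' ∧ f pos' = r)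
    (pos : ℕ × ℕ) : PPos move' (f pos) ↔ PPos move pos := by
  induction h : pos.1 + pos.2 using Nat.strong_induction_on generalizing pos with
  | _ n ih =>
    rw [PPos_iff_of_decreasesSum hmove', PPos_iff_of_decreasesSum hmove]
    constructor
    · intro hP pos' hm
      rw [← ih _ (h ▸ hmove _ _ hm) pos' rfl]
      exact hP _ ((hf _ _).2 ⟨pos', hm, rfl⟩)
    · intro hP r hm
      obtain ⟨pos', hm', rfl⟩ := (hf _ _).1 hm
      rw [ih _ (h ▸ hmove _ _ hm') pos' rfl]
      exact hP _ hm'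

lemma QMove_decreasesSum {p1 q1 p2 q2 : ℕ} (hp1 : 0 < p1) (hq2 : 0 < q2) {M : Set (ℕ × ℕ)}
    (hM : (0, 0) ∉ M) : DecreasesSum (QMove p1 q1 p2 q2 M) := by
  intro pos pos' h
  obtain ⟨s, t, hst, h1, h2, e1, e2, -⟩ := h
  have : 0 < s ∨ 0 < t := by
    by_contra! h0
    obtain ⟨rfl, rfl⟩ : s = 0 ∧ t = 0 := by omega
    exact hM hst
  have : 0 < p1 * s + q2 * t := by
    rcases this with hs | ht
    · exact Nat.add_pos_left (Nat.mul_pos hp1 hs) _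
    · exact Nat.add_pos_right _ (Nat.mul_pos hq2 ht)
  omega

lemma QMove_one_zero_zero_one_iff {M : Set (ℕ × ℕ)} {pos pos' : ℕ × ℕ} :
    QMove 1 0 0 1 M pos pos' ↔
      ∃ s t : ℕ, (s, t) ∈ M ∧ s ≤ pos.1 ∧ t ≤ pos.2 ∧ pos' = (pos.1 - s, pos.2 - t) := by
  simp [QMove, inBQ, Prod.ext_iff]

def coneEmbed (p1 q1 p2 q2 : ℕ) (corner pos : ℕ × ℕ) : ℕ × ℕ :=
  (corner.1 + pos.1 * p1 + pos.2 * p2, corner.2 + pos.1 * q1 + pos.2 * q2)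

lemma inBQ_coneEmbed {p1 q1 p2 q2 : ℕ} (hD : q1 * p2 ≤ p1 * q2) {corner : ℕ × ℕ}
    (h : inBQ p1 q1 p2 q2 corner) (pos : ℕ × ℕ) :
    inBQ p1 q1 p2 q2 (coneEmbed p1 q1 p2 q2 corner pos) := by
  obtain ⟨x, y⟩ := corner
  obtain ⟨A, B⟩ := pos
  obtain ⟨h1, h2⟩ := h
  simp only [coneEmbed, inBQ] at *
  constructor
  · nlinarith [Nat.mul_le_mul_left B hD]
  · nlinarith [Nat.mul_le_mul_left A hD]

lemma nonneg_of_inTQ {p1 q1 p2 q2 : ℕ} (hD : q1 * p2 ≤ p1 * q2) {x y : ℕ}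
    (hT : inTQ p1 q1 p2 q2 (x, y)) {a b : ℤ}
    (h1 : (x + a * p1 + b * p2) * q1 ≤ (y + a * q1 + b * q2) * (p1 : ℤ))
    (h2 : (y + a * q1 + b * q2) * p2 ≤ (x + a * p1 + b * p2) * (q2 : ℤ)) :
    0 ≤ a ∧ 0 ≤ b := by
  obtain ⟨⟨hx, hy⟩, hu, hv⟩ := hT
  have hDz : (q1 : ℤ) * p2 ≤ p1 * q2 := by exact_mod_cast hD
  have hx : (x : ℤ) * q1 ≤ y * p1 := by exact_mod_cast hx
  have hy : (y : ℤ) * p2 ≤ x * q2 := by exact_mod_cast hy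
  simp only at hu hv
  constructor
  · by_contra! ha
    nlinarith [mul_nonneg (by omega : (0 : ℤ) ≤ -1 - a) (by omega : (0 : ℤ) ≤ p1 * q2 - q1 * p2)]
  · by_contra! hb
    nlinarith [mul_nonneg (by omega : (0 : ℤ) ≤ -1 - b) (by omega : (0 : ℤ) ≤ p1 * q2 - q1 * p2)]

lemma QMove_coneEmbed_iff {p1 q1 p2 q2 : ℕ} (hD : q1 * p2 ≤ p1 * q2) {M : Set (ℕ × ℕ)}
    {corner : ℕ × ℕ} (hT : inTQ p1 q1 p2 q2 corner) (pos r : ℕ × ℕ) :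
    QMove p1 q1 p2 q2 M (coneEmbed p1 q1 p2 q2 corner pos) r ↔
      ∃ pos', QMove 1 0 0 1 M pos pos' ∧ coneEmbed p1 q1 p2 q2 corner pos' = r := by
  obtain ⟨x, y⟩ := corner
  obtain ⟨A, B⟩ := pos
  simp only [QMove_one_zero_zero_one_iff, coneEmbed]
  constructor
  · obtain ⟨r1, r2⟩ := r
    rintro ⟨s, t, hst, h1, h2, e1, e2, hB1, hB2⟩
    simp only at h1 h2 e1 e2 hB1 hB2
    have e1 : (r1 : ℤ) = x + (A - s : ℤ) * p1 + (B - t : ℤ) * p2 := by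
      rw [e1, Nat.cast_sub h1]; push_cast; ring
    have e2 : (r2 : ℤ) = y + (A - s : ℤ) * q1 + (B - t : ℤ) * q2 := by
      rw [e2, Nat.cast_sub h2]; push_cast; ring
    have hB1 : (r1 : ℤ) * q1 ≤ r2 * p1 := by exact_mod_cast hB1
    have hB2 : (r2 : ℤ) * p2 ≤ r1 * q2 := by exact_mod_cast hB2
    rw [e1, e2] at hB1 hB2
    obtain ⟨hs, ht⟩ := nonneg_of_inTQ hD hT hB1 hB2
    refine ⟨_, ⟨s, t, hst, by omega, by omega, rfl⟩, ?_⟩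
    simp only [Prod.ext_iff]
    constructor <;> zify [show s ≤ A by omega, show t ≤ B by omega] <;> linarith
  · rintro ⟨_, ⟨s, t, hst, hs, ht, rfl⟩, rfl⟩
    obtain ⟨a, rfl⟩ := Nat.exists_eq_add_of_le hs
    obtain ⟨b, rfl⟩ := Nat.exists_eq_add_of_le ht
    refine ⟨s, t, hst, by simp only; nlinarith, by simp only; nlinarith, ?_, ?_,
      inBQ_coneEmbed hD hT.1 (s + a - s, t + b - t)⟩ <;>
    · simp only [Nat.add_sub_cancel_left]
      rw [eq_comm, Nat.sub_eq_iff_eq_add (by nlinarith)]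
      ring

lemma inTQ_zero {p1 q1 p2 q2 : ℕ} (hD : q1 * p2 < p1 * q2) : inTQ p1 q1 p2 q2 (0, 0) := by
  have hDz : (q1 : ℤ) * p2 < p1 * q2 := by exact_mod_cast hD
  refine ⟨⟨by simp, by simp⟩, ?_, ?_⟩ <;> simp only [Nat.cast_zero] <;> linarith

/-- The subtraction game `G(M)` is the Q-subtraction game with `p₁ = q₂ = 1`,
`q₁ = p₂ = 0` (there the `B_Q`-constraint is vacuous). -/
theorem stmt_9 (p1 q1 p2 q2 : ℕ) (hp1 : 0 < p1) (hq2 : 0 < q2)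
    (hD : q1 * p2 < p1 * q2)
    (M : Set (ℕ × ℕ)) (hM : (0, 0) ∉ M) (A B : ℕ) :
    PPos (QMove 1 0 0 1 M) (A, B) ↔
      ∀ x y : ℕ, inTQ p1 q1 p2 q2 (x, y) →
        PPos (QMove p1 q1 p2 q2 M) (x + A * p1 + B * p2, y + A * q1 + B * q2) := by
  have transfer (x y : ℕ) (hT : inTQ p1 q1 p2 q2 (x, y)) :=
    PPos_map_iff (QMove_decreasesSum one_pos one_pos hM) (QMove_decreasesSum hp1 hq2 hM)
      (coneEmbed p1 q1 p2 q2 (x, y)) (QMove_coneEmbed_iff hD.le hT) (A, B)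
  exact ⟨fun h x y hT => (transfer x y hT).2 h,
    fun h => (transfer 0 0 (inTQ_zero hD)).1 (h 0 0 (inTQ_zero hD))⟩
end

section
/- The set of P-positions of Rational Wythoff Nim equals the set of all positions of the two forms (x + p₁·⌊φ²n⌋ + p₂·⌊φn⌋, y + q₁·⌊φ²n⌋ + q₂·⌊φn⌋) and (x + p₁·⌊φn⌋ + p₂·⌊φ²n⌋, y + q₁·⌊φn⌋ + q₂·⌊φ²n⌋), where (x,y) ranges over T_Q and n ranges over the nonnegative integers, and φ := (1+√5)/2 is the golden ratio. -/
/-- The move set of Rational Wythoff Nim. -/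
def MRW : Set (ℕ × ℕ) := {m | ∃ t : ℕ, 1 ≤ t ∧ (m = (0, t) ∨ m = (t, 0) ∨ m = (t, t))}

/-- The golden ratio `φ = (1+√5)/2`. -/
noncomputable def phi : ℝ := (1 + Real.sqrt 5) / 2

/-!
The vectors `(p1, q1)` and `(p2, q2)` span a lattice of determinant `D`, and dividing the
Cramer coordinates of a position of `B_Q` by `D` with remainder writes it as
`(x, y) + a (p1, q1) + b (p2, q2)` with `(x, y) ∈ T_Q`. On each such cone the moves of Rational
Wythoff Nim are exactly the moves of Wythoff Nim on `(a, b)`, so the P-positions are the images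
of Wythoff's P-positions `(⌊φn⌋, ⌊φ²n⌋)` and their mirror images. These are identified as
the unique set that admits no move within itself and can be reached from every other position,
using Rayleigh's theorem: the Beatty sequences of `φ` and `φ²` partition the positive integers.
-/

open Real

noncomputable def lowerWythoff (n : ℕ) : ℕ := ⌊phi * n⌋₊

noncomputable def upperWythoff (n : ℕ) : ℕ := ⌊phi ^ 2 * n⌋₊

theorem phi_eq_goldenRatio : phi = goldenRatio := rfl

@[simp] theorem lowerWythoff_zero : lowerWythoff 0 = 0 := by simp [lowerWythoff]

@[simp] theorem upperWythoff_zero : upperWythoff 0 = 0 := by simp [upperWythoff]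

theorem upperWythoff_eq (n : ℕ) : upperWythoff n = lowerWythoff n + n := by
  rw [upperWythoff, lowerWythoff, phi_eq_goldenRatio, goldenRatio_sq, add_mul, one_mul,
    Nat.floor_add_natCast (by positivity)]

theorem le_lowerWythoff (n : ℕ) : n ≤ lowerWythoff n :=
  Nat.le_floor <| le_mul_of_one_le_left (Nat.cast_nonneg n) one_lt_goldenRatio.le

theorem lowerWythoff_strictMono : StrictMono lowerWythoff := by
  refine strictMono_nat_of_lt_succ fun n ↦ Nat.lt_of_lt_of_le (Nat.lt_succ_self _) ?_
  rw [Nat.succ_eq_add_one, lowerWythoff, lowerWythoff, phi_eq_goldenRatio,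
    ← Nat.floor_add_one (by positivity)]
  refine Nat.floor_mono ?_
  push_cast
  nlinarith [one_lt_goldenRatio]

theorem upperWythoff_strictMono : StrictMono upperWythoff := fun m n hmn ↦ by
  rw [upperWythoff_eq, upperWythoff_eq]
  exact Nat.add_lt_add (lowerWythoff_strictMono hmn) hmn

theorem holderConjugate_phi_phi_sq : HolderConjugate phi (phi ^ 2) := by
  rw [holderConjugate_iff, phi_eq_goldenRatio]
  refine ⟨one_lt_goldenRatio, ?_⟩
  have hsq := goldenRatio_sq
  have hne := goldenRatio_ne_zero
  generalize goldenRatio = x at hsq hne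
  field_simp
  linear_combination -hsq

theorem mem_beattySeq_pos_iff {r : ℝ} (hr : 0 ≤ r) (j : ℕ) :
    (j : ℤ) ∈ {beattySeq r k | k > 0} ↔ ∃ n : ℕ, 0 < n ∧ ⌊r * n⌋₊ = j := by
  have hfloor (n : ℕ) : beattySeq r n = ⌊r * n⌋₊ := by
    rw [beattySeq, Int.natCast_floor_eq_floor (by positivity), Int.cast_natCast, mul_comm]
  constructor
  · rintro ⟨k, hk, hkj⟩
    lift k to ℕ using hk.le
    exact ⟨k, by exact_mod_cast hk, by rw [hfloor] at hkj; exact_mod_cast hkj⟩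
  · rintro ⟨n, hn, rfl⟩
    exact ⟨n, by exact_mod_cast hn, hfloor n⟩

theorem xor_lowerWythoff_upperWythoff {j : ℕ} (hj : 0 < j) :
    Xor (∃ n, 0 < n ∧ lowerWythoff n = j) (∃ n, 0 < n ∧ upperWythoff n = j) := by
  have hmem : (j : ℤ) ∈ {n : ℤ | 0 < n} := by simpa using hj
  rwa [← Irrational.beattySeq_symmDiff_beattySeq_pos holderConjugate_phi_phi_sq
    goldenRatio_irrational, Set.mem_symmDiff,
    mem_beattySeq_pos_iff holderConjugate_phi_phi_sq.nonneg,
    mem_beattySeq_pos_iff holderConjugate_phi_phi_sq.symm.nonneg] at hmem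

theorem eq_zero_of_lowerWythoff_eq_upperWythoff {m n : ℕ}
    (h : lowerWythoff m = upperWythoff n) : m = 0 ∧ n = 0 := by
  have hm := le_lowerWythoff m
  have hn := upperWythoff_eq n
  rcases Nat.eq_zero_or_pos n with rfl | hn0
  · rw [upperWythoff_zero] at h; omega
  rcases Nat.eq_zero_or_pos m with rfl | hm0
  · rw [lowerWythoff_zero] at h; omega
  rcases xor_lowerWythoff_upperWythoff (j := upperWythoff n) (by omega) with
    ⟨-, hB⟩ | ⟨-, hA⟩
  · exact absurd ⟨n, hn0, rfl⟩ hB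
  · exact absurd ⟨m, hm0, h⟩ hA

theorem exists_lowerWythoff_or_upperWythoff_eq (j : ℕ) :
    (∃ n, lowerWythoff n = j) ∨ ∃ n, 0 < n ∧ upperWythoff n = j := by
  rcases Nat.eq_zero_or_pos j with rfl | hj
  · exact .inl ⟨0, lowerWythoff_zero⟩
  rcases xor_lowerWythoff_upperWythoff hj with ⟨⟨n, -, hn⟩, -⟩ | ⟨h, -⟩
  exacts [.inl ⟨n, hn⟩, .inr h]

def IsWythoffPair (p : ℕ × ℕ) : Prop :=
  ∃ n, p = (lowerWythoff n, upperWythoff n) ∨ p = (upperWythoff n, lowerWythoff n)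

theorem IsWythoffPair.swap {a b : ℕ} (h : IsWythoffPair (a, b)) : IsWythoffPair (b, a) := by
  obtain ⟨n, h | h⟩ := h <;> simp only [Prod.mk.injEq] at h
  exacts [⟨n, .inr (by rw [h.1, h.2])⟩, ⟨n, .inl (by rw [h.1, h.2])⟩]

theorem IsWythoffPair.snd_eq_of_fst_eq {a b c : ℕ} (hb : IsWythoffPair (a, b))
    (hc : IsWythoffPair (a, c)) : b = c := by
  obtain ⟨m, hm | hm⟩ := hb <;> obtain ⟨n, hn | hn⟩ := hc <;>
    simp only [Prod.mk.injEq] at hm hn <;> rw [hm.2, hn.2]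
  · rw [lowerWythoff_strictMono.injective (hm.1.symm.trans hn.1)]
  · obtain ⟨rfl, rfl⟩ := eq_zero_of_lowerWythoff_eq_upperWythoff (hm.1.symm.trans hn.1); simp
  · obtain ⟨rfl, rfl⟩ := eq_zero_of_lowerWythoff_eq_upperWythoff (hn.1.symm.trans hm.1); simp
  · rw [upperWythoff_strictMono.injective (hm.1.symm.trans hn.1)]

theorem IsWythoffPair.fst_eq_of_sub_eq {a b c d : ℕ} (hab : IsWythoffPair (a, b))
    (hcd : IsWythoffPair (c, d)) (h : (b : ℤ) - a = d - c) : a = c := by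
  obtain ⟨m, hm | hm⟩ := hab <;> obtain ⟨n, hn | hn⟩ := hcd <;>
    simp only [Prod.mk.injEq] at hm hn <;> rw [hm.1, hn.1] <;>
    rw [hm.1, hm.2, hn.1, hn.2, upperWythoff_eq, upperWythoff_eq] at h <;> push_cast at h
  · rw [show m = n by omega]
  · obtain rfl : m = 0 := by omega
    obtain rfl : n = 0 := by omega
    simp
  · obtain rfl : m = 0 := by omega
    obtain rfl : n = 0 := by omega
    simp
  · rw [show m = n by omega]

theorem pPos_iff (move : ℕ × ℕ → ℕ × ℕ → Prop) (pos : ℕ × ℕ) :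
    PPos move pos ↔
      ∀ pos', move pos pos' → pos'.1 + pos'.2 < pos.1 + pos.2 → ¬ PPos move pos' := by
  rw [PPos]

theorem pPos_iff_of_kernel {move : ℕ × ℕ → ℕ × ℕ → Prop} {W : ℕ × ℕ → Prop}
    (hdec : ∀ p p', move p p' → p'.1 + p'.2 < p.1 + p.2)
    (hstable : ∀ p p', W p → move p p' → ¬ W p')
    (habsorb : ∀ p, ¬ W p → ∃ p', move p p' ∧ W p') (p : ℕ × ℕ) :
    PPos move p ↔ W p := by
  induction hN : p.1 + p.2 using Nat.strong_induction_on generalizing p with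
  | _ N ih =>
    rw [pPos_iff]
    constructor
    · intro hP
      by_contra hW
      obtain ⟨p', hmove, hW'⟩ := habsorb p hW
      have hlt := hdec p p' hmove
      exact hP p' hmove hlt ((ih _ (hN ▸ hlt) p' rfl).2 hW')
    · intro hW p' hmove hlt
      rw [ih _ (hN ▸ hlt) p' rfl]
      exact hstable p p' hW hmove

theorem pPos_comp_iff {m m' : ℕ × ℕ → ℕ × ℕ → Prop} {e : ℕ × ℕ → ℕ × ℕ}
    (he : ∀ p q, m (e p) q ↔ ∃ p', m' p p' ∧ q = e p')
    (hdec : ∀ p p', m' p p' → p'.1 + p'.2 < p.1 + p.2)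
    (hdec_e : ∀ p p', m' p p' → (e p').1 + (e p').2 < (e p).1 + (e p).2) (p : ℕ × ℕ) :
    PPos m (e p) ↔ PPos m' p := by
  induction hN : p.1 + p.2 using Nat.strong_induction_on generalizing p with
  | _ N ih =>
    rw [pPos_iff, pPos_iff]
    constructor
    · intro hP p' hmove hlt
      rw [← ih _ (hN ▸ hlt) p' rfl]
      exact hP _ ((he p _).2 ⟨p', hmove, rfl⟩) (hdec_e p p' hmove)
    · rintro hP q hmove -
      obtain ⟨p', hmove', rfl⟩ := (he p q).1 hmove
      have hlt := hdec p p' hmove'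
      rw [ih _ (hN ▸ hlt) p' rfl]
      exact hP p' hmove' hlt

def SubMove (M : Set (ℕ × ℕ)) (p p' : ℕ × ℕ) : Prop := ∃ m ∈ M, p = p' + m

theorem subMove_sum_lt {M : Set (ℕ × ℕ)} (hM : (0, 0) ∉ M) {p p' : ℕ × ℕ}
    (h : SubMove M p p') : p'.1 + p'.2 < p.1 + p.2 := by
  obtain ⟨⟨s, t⟩, hm, rfl⟩ := h
  have : s ≠ 0 ∨ t ≠ 0 := by
    contrapose! hM
    obtain ⟨rfl, rfl⟩ := hM
    exact hm
  simp only [Prod.fst_add, Prod.snd_add]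
  omega

theorem zero_notMem_MRW : ((0, 0) : ℕ × ℕ) ∉ MRW := by
  rintro ⟨t, ht, h | h | h⟩ <;> simp only [Prod.mk.injEq] at h <;> omega

theorem subMove_MRW_swap {a b c d : ℕ} (h : SubMove MRW (a, b) (c, d)) :
    SubMove MRW (b, a) (d, c) := by
  obtain ⟨m, ⟨t, ht, rfl | rfl | rfl⟩, h⟩ := h <;>
    simp only [Prod.mk_add_mk, Prod.mk.injEq] at h
  · exact ⟨(t, 0), ⟨t, ht, .inr (.inl rfl)⟩, by rw [h.1, h.2]; rfl⟩
  · exact ⟨(0, t), ⟨t, ht, .inl rfl⟩, by rw [h.1, h.2]; rfl⟩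
  · exact ⟨(t, t), ⟨t, ht, .inr (.inr rfl)⟩, by rw [h.1, h.2]; rfl⟩

theorem IsWythoffPair.not_subMove {p p' : ℕ × ℕ} (hp : IsWythoffPair p)
    (hp' : IsWythoffPair p') : ¬ SubMove MRW p p' := by
  obtain ⟨a, b⟩ := p'
  rintro ⟨m, ⟨t, ht, rfl | rfl | rfl⟩, rfl⟩ <;> simp only [Prod.mk_add_mk, add_zero] at hp
  · have := hp.snd_eq_of_fst_eq hp'
    omega
  · have := hp.swap.snd_eq_of_fst_eq hp'.swap
    omega
  · have := hp.fst_eq_of_sub_eq hp' (by push_cast; ring)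
    omega

theorem IsWythoffPair.exists_subMove_of_le {a b : ℕ} (hab : a ≤ b)
    (h : ¬ IsWythoffPair (a, b)) : ∃ p', SubMove MRW (a, b) p' ∧ IsWythoffPair p' := by
  have hmove {c d s t : ℕ} (hst : (s, t) ∈ MRW) (hc : a = c + s) (hd : b = d + t) :
      SubMove MRW (a, b) (c, d) := ⟨(s, t), hst, by rw [hc, hd]; rfl⟩
  rcases exists_lowerWythoff_or_upperWythoff_eq a with ⟨n, rfl⟩ | ⟨n, hn, rfl⟩
  · have hB := upperWythoff_eq n
    rcases lt_trichotomy b (upperWythoff n) with hlt | rfl | hgt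
    · -- descend along the diagonal to the pair with the same difference `b - a`
      set d := b - lowerWythoff n
      have hA := lowerWythoff_strictMono (show d < n by omega)
      have hB' := upperWythoff_eq d
      set k := lowerWythoff n - lowerWythoff d
      exact ⟨(lowerWythoff d, upperWythoff d), hmove (s := k) (t := k)
        ⟨k, by omega, .inr (.inr rfl)⟩ (by omega) (by omega), ⟨d, .inl rfl⟩⟩
    · exact absurd ⟨n, .inl rfl⟩ h
    · exact ⟨_, hmove ⟨b - upperWythoff n, by omega, .inl rfl⟩ (add_zero _).symm
        (by omega), ⟨n, .inl rfl⟩⟩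
  · have hB := upperWythoff_eq n
    exact ⟨_, hmove ⟨b - lowerWythoff n, by omega, .inl rfl⟩ (add_zero _).symm
      (by omega), ⟨n, .inr rfl⟩⟩

theorem IsWythoffPair.exists_subMove {p : ℕ × ℕ} (h : ¬ IsWythoffPair p) :
    ∃ p', SubMove MRW p p' ∧ IsWythoffPair p' := by
  obtain ⟨a, b⟩ := p
  rcases le_total a b with hab | hba
  · exact exists_subMove_of_le hab h
  · obtain ⟨⟨c, d⟩, hmove, hP⟩ := exists_subMove_of_le hba (mt IsWythoffPair.swap h)
    exact ⟨(d, c), subMove_MRW_swap hmove, hP.swap⟩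

theorem pPos_subMove_MRW_iff (p : ℕ × ℕ) : PPos (SubMove MRW) p ↔ IsWythoffPair p :=
  pPos_iff_of_kernel (fun _ _ ↦ subMove_sum_lt zero_notMem_MRW)
    (fun _ _ hp hmove hp' ↦ hp.not_subMove hp' hmove) (fun _ ↦ IsWythoffPair.exists_subMove) p

section QGame

variable {p1 q1 p2 q2 : ℕ}

def qEmbed (p1 q1 p2 q2 x y : ℕ) (ab : ℕ × ℕ) : ℕ × ℕ :=
  (x + p1 * ab.1 + p2 * ab.2, y + q1 * ab.1 + q2 * ab.2)

/- `q2 X - p2 Y` and `p1 Y - q1 X` are `D` times the coordinates of `(X, Y)` in the basis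
`(p1, q1), (p2, q2)` (Cramer's rule); `B_Q` is where both are nonnegative and `T_Q` is where
both lie in `[0, D)`. -/
theorem inBQ_iff {pos : ℕ × ℕ} :
    inBQ p1 q1 p2 q2 pos ↔
      0 ≤ (q2 * pos.1 - p2 * pos.2 : ℤ) ∧ 0 ≤ (p1 * pos.2 - q1 * pos.1 : ℤ) := by
  rw [inBQ]
  constructor <;> rintro ⟨h1, h2⟩ <;> constructor <;> zify at * <;> linarith

theorem inTQ_iff {pos : ℕ × ℕ} :
    inTQ p1 q1 p2 q2 pos ↔
      (0 ≤ (q2 * pos.1 - p2 * pos.2 : ℤ) ∧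
        (q2 * pos.1 - p2 * pos.2 : ℤ) < p1 * q2 - q1 * p2) ∧
      (0 ≤ (p1 * pos.2 - q1 * pos.1 : ℤ) ∧
        (p1 * pos.2 - q1 * pos.1 : ℤ) < p1 * q2 - q1 * p2) := by
  rw [inTQ, inBQ_iff]
  constructor
  · rintro ⟨⟨h1, h2⟩, h3, h4⟩
    exact ⟨⟨h1, by linarith⟩, h2, by linarith⟩
  · rintro ⟨⟨h1, h3⟩, h2, h4⟩
    exact ⟨⟨h1, h2⟩, by linarith, by linarith⟩

theorem inBQ_qEmbed (hD : q1 * p2 < p1 * q2) {x y : ℕ} (h : inBQ p1 q1 p2 q2 (x, y))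
    (ab : ℕ × ℕ) : inBQ p1 q1 p2 q2 (qEmbed p1 q1 p2 q2 x y ab) := by
  have hD' : (q1 * p2 : ℤ) < p1 * q2 := by exact_mod_cast hD
  have ha : (0 : ℤ) ≤ ab.1 := Nat.cast_nonneg _
  have hb : (0 : ℤ) ≤ ab.2 := Nat.cast_nonneg _
  rw [inBQ_iff] at h ⊢
  simp only [qEmbed]
  push_cast
  constructor <;> nlinarith

theorem exists_qEmbed_of_inBQ (hD : q1 * p2 < p1 * q2) {pos : ℕ × ℕ}
    (h : inBQ p1 q1 p2 q2 pos) :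
    ∃ x y ab, inTQ p1 q1 p2 q2 (x, y) ∧ pos = qEmbed p1 q1 p2 q2 x y ab := by
  obtain ⟨X, Y⟩ := pos
  have hDpos : (0 : ℤ) < p1 * q2 - q1 * p2 := by
    have : (q1 * p2 : ℤ) < p1 * q2 := by exact_mod_cast hD
    linarith
  rw [inBQ_iff] at h
  set α : ℤ := q2 * X - p2 * Y with hα
  set β : ℤ := p1 * Y - q1 * X with hβ
  set D : ℤ := p1 * q2 - q1 * p2 with hDdef
  lift α / D to ℕ using Int.ediv_nonneg h.1 hDpos.le with a ha
  lift β / D to ℕ using Int.ediv_nonneg h.2 hDpos.le with b hb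
  have hrα : α % D = α - a * D := by rw [Int.emod_def, ← ha]; ring
  have hrβ : β % D = β - b * D := by rw [Int.emod_def, ← hb]; ring
  have hrα0 := Int.emod_nonneg α hDpos.ne'
  have hrβ0 := Int.emod_nonneg β hDpos.ne'
  -- `D X = p1 α + p2 β` and `D Y = q1 α + q2 β`
  have hx : 0 ≤ (X - p1 * a - p2 * b : ℤ) := by
    refine nonneg_of_mul_nonneg_right (a := D) ?_ hDpos
    have : D * (X - p1 * a - p2 * b) = p1 * (α % D) + p2 * (β % D) := by
      rw [hrα, hrβ, hα, hβ, hDdef]; ring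
    rw [this]; positivity
  have hy : 0 ≤ (Y - q1 * a - q2 * b : ℤ) := by
    refine nonneg_of_mul_nonneg_right (a := D) ?_ hDpos
    have : D * (Y - q1 * a - q2 * b) = q1 * (α % D) + q2 * (β % D) := by
      rw [hrα, hrβ, hα, hβ, hDdef]; ring
    rw [this]; positivity
  lift (X - p1 * a - p2 * b : ℤ) to ℕ using hx with x hxeq
  lift (Y - q1 * a - q2 * b : ℤ) to ℕ using hy with y hyeq
  refine ⟨x, y, (a, b), ?_, ?_⟩
  · have hcα : (q2 * x - p2 * y : ℤ) = α % D := by rw [hxeq, hyeq, hrα, hα, hDdef]; ring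
    have hcβ : (p1 * y - q1 * x : ℤ) = β % D := by rw [hxeq, hyeq, hrβ, hβ, hDdef]; ring
    rw [inTQ_iff]
    simp only [hcα, hcβ]
    exact ⟨⟨hrα0, Int.emod_lt_of_pos _ hDpos⟩, hrβ0, Int.emod_lt_of_pos _ hDpos⟩
  · simp only [qEmbed, Prod.mk.injEq]
    constructor <;> zify <;> linarith

/- A move by `(s, t)` with `s > a` makes the first Cramer coordinate negative, since over `T_Q` it
is `(q2 x - p2 y) + (a - s) D` with `q2 x - p2 y < D`; similarly for `t > b`. -/
theorem qMove_qEmbed_iff (hD : q1 * p2 < p1 * q2) {M : Set (ℕ × ℕ)} {x y : ℕ}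
    (hT : inTQ p1 q1 p2 q2 (x, y)) (ab : ℕ × ℕ) (pos' : ℕ × ℕ) :
    QMove p1 q1 p2 q2 M (qEmbed p1 q1 p2 q2 x y ab) pos' ↔
      ∃ ab', SubMove M ab ab' ∧ pos' = qEmbed p1 q1 p2 q2 x y ab' := by
  obtain ⟨a, b⟩ := ab
  constructor
  · rintro ⟨s, t, hm, hle1, hle2, he1, he2, hB⟩
    simp only [qEmbed] at hle1 hle2 he1 he2
    rw [inTQ_iff] at hT
    rw [inBQ_iff] at hB
    have hD' : (0 : ℤ) < p1 * q2 - q1 * p2 := by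
      have : (q1 * p2 : ℤ) < p1 * q2 := by exact_mod_cast hD
      linarith
    have h1 : (pos'.1 : ℤ) = x + p1 * a + p2 * b - (p1 * s + p2 * t) := by
      rw [he1]; push_cast [hle1]; ring
    have h2 : (pos'.2 : ℤ) = y + q1 * a + q2 * b - (q1 * s + q2 * t) := by
      rw [he2]; push_cast [hle2]; ring
    have hsa : s ≤ a := by
      have : 0 < ((a : ℤ) - s + 1) * (p1 * q2 - q1 * p2) := by rw [h1, h2] at hB; linarith
      have := pos_of_mul_pos_left this hD'.le
      omega
    have htb : t ≤ b := by
      have : 0 < ((b : ℤ) - t + 1) * (p1 * q2 - q1 * p2) := by rw [h1, h2] at hB; linarith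
      have := pos_of_mul_pos_left this hD'.le
      omega
    obtain ⟨a', rfl⟩ : ∃ a', a = a' + s := ⟨a - s, by omega⟩
    obtain ⟨b', rfl⟩ : ∃ b', b = b' + t := ⟨b - t, by omega⟩
    refine ⟨(a', b'), ⟨(s, t), hm, rfl⟩, ?_⟩
    simp only [qEmbed, mul_add] at he1 he2 ⊢
    exact Prod.ext (by omega) (by omega)
  · rintro ⟨⟨a', b'⟩, ⟨⟨s, t⟩, hm, hab⟩, rfl⟩
    simp only [Prod.mk_add_mk, Prod.mk.injEq] at hab
    obtain ⟨rfl, rfl⟩ := hab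
    refine ⟨s, t, hm, ?_, ?_, ?_, ?_, inBQ_qEmbed hD hT.1 _⟩ <;>
      simp only [qEmbed, mul_add] <;> omega

theorem qEmbed_sum_lt (hp1 : 0 < p1) (hq2 : 0 < q2) {M : Set (ℕ × ℕ)} (hM : (0, 0) ∉ M)
    (x y : ℕ) {ab ab' : ℕ × ℕ} (h : SubMove M ab ab') :
    (qEmbed p1 q1 p2 q2 x y ab').1 + (qEmbed p1 q1 p2 q2 x y ab').2 <
      (qEmbed p1 q1 p2 q2 x y ab).1 + (qEmbed p1 q1 p2 q2 x y ab).2 := by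
  obtain ⟨⟨s, t⟩, hm, rfl⟩ := h
  have : 0 < s ∨ 0 < t := by
    contrapose! hM
    obtain ⟨rfl, rfl⟩ : s = 0 ∧ t = 0 := by omega
    exact hm
  have : 0 < p1 * s + q2 * t := by rcases this with h | h <;> positivity
  simp only [qEmbed, Prod.fst_add, Prod.snd_add, mul_add]
  omega

theorem pPos_qEmbed_iff (hp1 : 0 < p1) (hq2 : 0 < q2) (hD : q1 * p2 < p1 * q2) {x y : ℕ}
    (hT : inTQ p1 q1 p2 q2 (x, y)) (ab : ℕ × ℕ) :
    PPos (QMove p1 q1 p2 q2 MRW) (qEmbed p1 q1 p2 q2 x y ab) ↔ IsWythoffPair ab :=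
  (pPos_comp_iff (qMove_qEmbed_iff hD hT) (fun _ _ ↦ subMove_sum_lt zero_notMem_MRW)
    (fun _ _ ↦ qEmbed_sum_lt hp1 hq2 zero_notMem_MRW x y) ab).trans (pPos_subMove_MRW_iff ab)

end QGame

theorem stmt_11 (p1 q1 p2 q2 : ℕ) (hp1 : 0 < p1) (hq2 : 0 < q2)
    (hD : q1 * p2 < p1 * q2) :
    {pos : ℕ × ℕ | inBQ p1 q1 p2 q2 pos ∧ PPos (QMove p1 q1 p2 q2 MRW) pos} =
      {pos : ℕ × ℕ | ∃ x y n : ℕ, inTQ p1 q1 p2 q2 (x, y) ∧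
        (pos = (x + p1 * ⌊phi ^ 2 * n⌋₊ + p2 * ⌊phi * n⌋₊,
                y + q1 * ⌊phi ^ 2 * n⌋₊ + q2 * ⌊phi * n⌋₊) ∨
         pos = (x + p1 * ⌊phi * n⌋₊ + p2 * ⌊phi ^ 2 * n⌋₊,
                y + q1 * ⌊phi * n⌋₊ + q2 * ⌊phi ^ 2 * n⌋₊))} := by
  ext pos
  constructor
  · rintro ⟨hB, hP⟩
    obtain ⟨x, y, ab, hT, rfl⟩ := exists_qEmbed_of_inBQ hD hB
    obtain ⟨n, rfl | rfl⟩ := (pPos_qEmbed_iff hp1 hq2 hD hT ab).1 hP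
    exacts [⟨x, y, n, hT, .inr rfl⟩, ⟨x, y, n, hT, .inl rfl⟩]
  · rintro ⟨x, y, n, hT, rfl | rfl⟩
    · exact ⟨inBQ_qEmbed hD hT.1 (upperWythoff n, lowerWythoff n),
        (pPos_qEmbed_iff hp1 hq2 hD hT _).2 ⟨n, .inr rfl⟩⟩
    · exact ⟨inBQ_qEmbed hD hT.1 (lowerWythoff n, upperWythoff n),
        (pPos_qEmbed_iff hp1 hq2 hD hT _).2 ⟨n, .inl rfl⟩⟩
end
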